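/- Let f : 𝔽₂^{2n} → ℝ be a function whose symplectic Fourier transform is pointwise nonnegative, i.e., f̂(a) ≥ 0 for all a ∈ 𝔽₂^{2n}. Then for every linear subspace V ⊆ 𝔽₂^{2n} and every z ∈ 𝔽₂^{2n}, Σ_{x ∈ V} f(x) ≥ Σ_{x ∈ V} f(x+z). -/

import Mathlib

open scoped BigOperators ComplexOrder

/-- The phase space `𝔽₂^{2n}`, written as pairs `(a, b)` with `a, b ∈ 𝔽₂ⁿ`. -/
abbrev PhaseSpace (n : ℕ) := (Fin n → ZMod 2) × (Fin n → ZMod 2)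

/-- The symplectic product `[x, y] = a·d + b·c` for `x = (a,b)`, `y = (c,d)`. -/
def sympl {n : ℕ} (x y : PhaseSpace n) : ZMod 2 :=
  ∑ i, x.1 i * y.2 i + ∑ i, x.2 i * y.1 i

/-- The symplectic Fourier transform `f̂(a) = 4^{-n} ∑_x (-1)^{[a,x]} f(x)`. -/
noncomputable def sft {n : ℕ} (f : PhaseSpace n → ℝ) (a : PhaseSpace n) : ℝ :=
  (1 / 4 ^ n) * ∑ x, (-1 : ℝ) ^ (sympl a x).val * f x

/-- The symplectic complement of a set `S ⊆ 𝔽₂^{2n}`. -/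
def symplComplement {n : ℕ} (S : Set (PhaseSpace n)) : Set (PhaseSpace n) :=
  {x | ∀ a ∈ S, sympl x a = 0}

/-!
Fourier inversion writes `f` as `∑ₐ f̂(a) χₐ` with `χₐ(x) = (-1)^{[a,x]}`, and translating by `z`
multiplies `f̂(a)` by `χₐ(z) ∈ {±1}`. Summing over `V` turns both sides into combinations of the
character sums `∑_{x ∈ V} χₐ(x)`, which are `|V|` or `0`, hence nonnegative. Since `f̂ ≥ 0` and
`χₐ(z) ≤ 1`, the comparison holds coefficient by coefficient.
-/

open Finset

theorem AddChar.sum_indicator_addSubgroup_nonneg {G R : Type*} [AddGroup G] [Fintype G]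
    [CommRing R] [LinearOrder R] [IsStrictOrderedRing R]
    (H : AddSubgroup G) (ψ : AddChar G R) :
    0 ≤ ∑ x, (H : Set G).indicator ψ x := by
  classical
  have h := (ψ.compAddMonoidHom H.subtype).sum_eq_ite
  simp only [AddChar.compAddMonoidHom_apply, AddSubgroup.coe_subtype] at h
  calc 0 ≤ ∑ x : H, ψ x := by rw [h]; split_ifs <;> positivity
    _ = ∑ x, (H : Set G).indicator ψ x :=
      (Finset.sum_congr_set (H : Set G) _ (fun x => ψ x)
        (fun x hx => Set.indicator_of_mem hx ψ) (fun x hx => Set.indicator_of_notMem hx ψ)).symm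

def signChar : AddChar (ZMod 2) ℝ where
  toFun u := (-1) ^ u.val
  map_zero_eq_one' := by simp
  map_add_eq_mul' u v := by rw [ZMod.val_add, ← neg_one_pow_eq_pow_mod_two, pow_add]

lemma signChar_apply (u : ZMod 2) : signChar u = (-1) ^ u.val := rfl

lemma signChar_one : signChar 1 = -1 := by simp [signChar_apply, ZMod.val_one]

lemma signChar_eq_one_iff {u : ZMod 2} : signChar u = 1 ↔ u = 0 := by
  obtain rfl | rfl : u = 0 ∨ u = 1 := by decide +revert
  · simp
  · norm_num [signChar_one]

lemma signChar_le_one (u : ZMod 2) : signChar u ≤ 1 := by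
  obtain rfl | rfl : u = 0 ∨ u = 1 := by decide +revert
  · simp
  · norm_num [signChar_one]

section Symplectic

variable {n : ℕ}

lemma sympl_comm (x y : PhaseSpace n) : sympl x y = sympl y x := by
  simp only [sympl, mul_comm, add_comm]

lemma sympl_add_right (a x y : PhaseSpace n) : sympl a (x + y) = sympl a x + sympl a y := by
  simp only [sympl, Prod.fst_add, Prod.snd_add, Pi.add_apply, mul_add, sum_add_distrib]
  abel

lemma exists_sympl_ne_zero {w : PhaseSpace n} (hw : w ≠ 0) : ∃ a, sympl w a ≠ 0 := by
  obtain ⟨i, hi⟩ | ⟨i, hi⟩ : (∃ i, w.1 i ≠ 0) ∨ ∃ i, w.2 i ≠ 0 := by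
    by_contra! h
    exact hw (Prod.ext (funext h.1) (funext h.2))
  · exact ⟨(0, Pi.single i 1), by simpa [sympl, Pi.single_apply] using hi⟩
  · exact ⟨(Pi.single i 1, 0), by simpa [sympl, Pi.single_apply] using hi⟩

def symplChar (a : PhaseSpace n) : AddChar (PhaseSpace n) ℝ :=
  signChar.compAddMonoidHom (AddMonoidHom.mk' (sympl a) (sympl_add_right a))

lemma symplChar_apply (a x : PhaseSpace n) : symplChar a x = signChar (sympl a x) := rfl

lemma symplChar_comm (a x : PhaseSpace n) : symplChar a x = symplChar x a := by
  rw [symplChar_apply, symplChar_apply, sympl_comm]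

lemma symplChar_le_one (a x : PhaseSpace n) : symplChar a x ≤ 1 := signChar_le_one _

lemma symplChar_eq_zero_iff {w : PhaseSpace n} : symplChar w = 0 ↔ w = 0 := by
  refine ⟨fun h => ?_, fun h => ?_⟩
  · by_contra hw
    obtain ⟨a, ha⟩ := exists_sympl_ne_zero hw
    exact ha (signChar_eq_one_iff.mp (by rw [← symplChar_apply, h, AddChar.zero_apply]))
  · ext x
    simp [h, symplChar_apply, sympl]

lemma sum_symplChar (w : PhaseSpace n) :
    ∑ a, symplChar a w = if w = 0 then (4 : ℝ) ^ n else 0 := by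
  classical
  simp_rw [symplChar_comm _ w, AddChar.sum_eq_ite, symplChar_eq_zero_iff]
  congr 1
  norm_num [Fintype.card_prod, Fintype.card_fun, ← mul_pow]

lemma sft_eq_sum_symplChar (f : PhaseSpace n → ℝ) (a : PhaseSpace n) :
    sft f a = (1 / 4 ^ n) * ∑ x, symplChar a x * f x := rfl

theorem sum_symplChar_mul_sft (f : PhaseSpace n → ℝ) (x : PhaseSpace n) :
    ∑ a, symplChar a x * sft f a = f x := by
  have hiff (y : PhaseSpace n) : x + y = 0 ↔ x = y := by
    rw [add_eq_zero_iff_eq_neg, ZModModule.neg_eq_self]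
  calc ∑ a, symplChar a x * sft f a
      = ∑ a, 1 / 4 ^ n * ∑ y, symplChar a (x + y) * f y := by
        refine sum_congr rfl fun a _ => ?_
        simp_rw [sft_eq_sum_symplChar, mul_left_comm (symplChar a x), mul_sum, AddChar.map_add_eq_mul, mul_assoc]
    _ = 1 / 4 ^ n * ∑ y, (∑ a, symplChar a (x + y)) * f y := by
        rw [← mul_sum, sum_comm]
        simp_rw [sum_mul]
    _ = f x := by
        simp_rw [sum_symplChar, hiff, ite_mul, zero_mul, sum_ite_eq, mem_univ, if_true]
        field_simp

theorem sft_comp_add_right (f : PhaseSpace n → ℝ) (z a : PhaseSpace n) :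
    sft (fun y => f (y + z)) a = symplChar a z * sft f a := by
  have hshift : ∑ y, symplChar a y * f (y + z) = ∑ y, symplChar a (y + z) * f y :=
    Fintype.sum_equiv (Equiv.addRight z) _ _ fun y => by
      simp [add_assoc, ZModModule.add_self]
  simp_rw [sft_eq_sum_symplChar, hshift, AddChar.map_add_eq_mul, mul_sum]
  exact sum_congr rfl fun _ _ => by ring

theorem sum_indicator_eq_sum_mul_sft (S : Set (PhaseSpace n)) (g : PhaseSpace n → ℝ) :
    ∑ x, S.indicator g x = ∑ a, (∑ x, S.indicator (symplChar a) x) * sft g a := by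
  calc ∑ x, S.indicator g x = ∑ x, ∑ a, S.indicator (symplChar a) x * sft g a := by
        refine sum_congr rfl fun x _ => ?_
        by_cases hx : x ∈ S <;> simp [hx, sum_symplChar_mul_sft]
    _ = _ := by
        rw [sum_comm]
        simp_rw [sum_mul]

end Symplectic

/-- If f̂ ≥ 0 pointwise, then for every linear subspace V ⊆ 𝔽₂^{2n}
and every z, ∑_{x ∈ V} f(x) ≥ ∑_{x ∈ V} f(x+z). -/
theorem sum_subspace_ge_sum_coset {n : ℕ} (f : PhaseSpace n → ℝ)
    (hf : ∀ a, 0 ≤ sft f a)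
    (V : Submodule (ZMod 2) (PhaseSpace n)) (z : PhaseSpace n) :
    ∑ x, (V : Set (PhaseSpace n)).indicator f x
      ≥ ∑ x, (V : Set (PhaseSpace n)).indicator (fun y => f (y + z)) x := by
  rw [ge_iff_le, sum_indicator_eq_sum_mul_sft, sum_indicator_eq_sum_mul_sft]
  refine sum_le_sum fun a _ => mul_le_mul_of_nonneg_left ?_
    (AddChar.sum_indicator_addSubgroup_nonneg V.toAddSubgroup (symplChar a))
  rw [sft_comp_add_right]
  exact mul_le_of_le_one_left (hf a) (symplChar_le_one a z)
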